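/- Let Σ be a finite alphabet, f : Σ^n → T a function into a finite set T, and G a finite group of automorphisms of f that is index transitive, meaning for every i,j ∈ [n] there exists an automorphism π = (τ,σ) ∈ G with τ(i) = j. Then for every nonzero adversary matrix Γ for f there exists a nonzero adversary matrix Γ' for f with ‖Γ' ∘ D_i‖ = ‖Γ' ∘ D_j‖ for all i,j ∈ [n] and ‖Γ'‖ / max_i ‖Γ' ∘ D_i‖ ≥ ‖Γ‖ / max_i ‖Γ ∘ D_i‖. -/

import Mathlib

open scoped Matrix

/-- The spectral norm of a complex matrix. -/
noncomputable def specNorm {p q : Type*} [Fintype p] [Fintype q] [DecidableEq q]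
    (A : Matrix p q ℂ) : ℝ :=
  ‖LinearMap.toContinuousLinearMap (Matrix.toEuclideanLin A)‖

/-- The zero-one matrix `D_i` with `D_i[x,y] = 1` iff `x_i ≠ y_i`. -/
def Dmat {n : ℕ} {A : Type*} [DecidableEq A] (i : Fin n) :
    Matrix (Fin n → A) (Fin n → A) ℂ :=
  Matrix.of fun x y => if x i ≠ y i then 1 else 0

open scoped Matrix.Norms.L2Operator

section Aux

variable {ι : Type*} [Fintype ι] [DecidableEq ι]

lemma specNorm_eq (M : Matrix ι ι ℂ) : specNorm M = ‖M‖ := rfl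

lemma specNorm_smul (c : ℝ) (M : Matrix ι ι ℂ) : specNorm ((c:ℂ) • M) = |c| * specNorm M := by
  rw [specNorm_eq, specNorm_eq, norm_smul]
  simp [Complex.norm_real]

lemma specNorm_pos {M : Matrix ι ι ℂ} (h : M ≠ 0) : 0 < specNorm M := by
  rw [specNorm_eq, norm_pos_iff]; exact h

/-- the (real part of the) quadratic form of a matrix -/
noncomputable def quad (M : Matrix ι ι ℂ) (δ : EuclideanSpace ℂ ι) : ℝ :=
  Complex.re (inner (𝕜 := ℂ) δ (Matrix.toEuclideanLin M δ))

lemma quad_add (M N : Matrix ι ι ℂ) (δ : EuclideanSpace ℂ ι) :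
    quad (M + N) δ = quad M δ + quad N δ := by
  unfold quad
  rw [map_add, LinearMap.add_apply, inner_add_right]
  simp

lemma quad_smul (c : ℝ) (M : Matrix ι ι ℂ) (δ : EuclideanSpace ℂ ι) :
    quad ((c:ℂ) • M) δ = c * quad M δ := by
  unfold quad
  rw [map_smul, LinearMap.smul_apply, inner_smul_right]
  simp

lemma abs_quad_le (M : Matrix ι ι ℂ) (δ : EuclideanSpace ℂ ι) (hδ : ‖δ‖ = 1) :
    |quad M δ| ≤ specNorm M := by
  unfold quad
  have h1 : |Complex.re (inner (𝕜 := ℂ) δ (Matrix.toEuclideanLin M δ))| ≤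
      ‖(inner (𝕜 := ℂ) δ (Matrix.toEuclideanLin M δ) : ℂ)‖ := Complex.abs_re_le_norm _
  refine h1.trans ?_
  have h2 := norm_inner_le_norm (𝕜 := ℂ) δ (Matrix.toEuclideanLin M δ)
  refine h2.trans ?_
  have h3 : ‖Matrix.toEuclideanLin M δ‖ ≤ specNorm M * ‖δ‖ :=
    (LinearMap.toContinuousLinearMap (Matrix.toEuclideanLin M)).le_opNorm δ
  calc ‖δ‖ * ‖(Matrix.toEuclideanLin M) δ‖ ≤ ‖δ‖ * (specNorm M * ‖δ‖) :=
        mul_le_mul_of_nonneg_left h3 (norm_nonneg _)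
    _ = specNorm M := by rw [hδ]; ring

lemma quad_sum {κ : Type*} (s : Finset κ) (M : κ → Matrix ι ι ℂ) (δ : EuclideanSpace ℂ ι) :
    quad (∑ j ∈ s, M j) δ = ∑ j ∈ s, quad (M j) δ := by
  classical
  induction s using Finset.induction with
  | empty => simp [quad]
  | insert _ _ h ih => rw [Finset.sum_insert h, quad_add, ih, Finset.sum_insert h]

lemma herm_exists_unit [Nonempty ι] (M : Matrix ι ι ℂ) (hM : M.IsHermitian) :
    ∃ (s : ℝ) (δ : EuclideanSpace ℂ ι), (s = 1 ∨ s = -1) ∧ ‖δ‖ = 1 ∧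
      quad ((s:ℂ) • M) δ = specNorm M := by
  classical
  set b := hM.eigenvectorBasis with hb
  set μ := hM.eigenvalues with hμ
  obtain ⟨i₀, -, hi₀⟩ := Finset.exists_max_image Finset.univ (fun i => |μ i|)
    ⟨Classical.arbitrary ι, Finset.mem_univ _⟩
  set δ : EuclideanSpace ℂ ι := b i₀ with hδ
  have hδ1 : ‖δ‖ = 1 := b.orthonormal.1 i₀
  have heig : ∀ i, Matrix.toEuclideanLin M (b i) = (μ i : ℂ) • (b i) := by
    intro i
    have h1 := hM.mulVec_eigenvectorBasis i
    ext k
    have h2 := congrFun h1 k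
    simp only [Matrix.toEuclideanLin_apply]
    simpa [Pi.smul_apply, Complex.real_smul] using h2
  have hquad : ∀ i, quad M (b i) = μ i := by
    intro i
    unfold quad
    rw [heig i, inner_smul_right, inner_self_eq_norm_sq_to_K]
    have : ‖b i‖ = 1 := b.orthonormal.1 i
    rw [this]
    simp
  have hlb : |μ i₀| ≤ specNorm M := by
    have := abs_quad_le M δ hδ1
    rwa [hquad i₀] at this
  have hub : specNorm M ≤ |μ i₀| := by
    apply ContinuousLinearMap.opNorm_le_bound _ (abs_nonneg _)
    intro x
    have hrepr : ∀ i, b.repr (Matrix.toEuclideanLin M x) i = (μ i : ℂ) * b.repr x i := by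
      intro i
      rw [b.repr_apply_apply, b.repr_apply_apply]
      have hsym := (Matrix.isHermitian_iff_isSymmetric.1 hM)
      calc inner (𝕜 := ℂ) (b i) (Matrix.toEuclideanLin M x)
          = inner (𝕜 := ℂ) (Matrix.toEuclideanLin M (b i)) x := (hsym _ _).symm
        _ = (μ i : ℂ) * inner (𝕜 := ℂ) (b i) x := by
            rw [heig i, inner_smul_left, Complex.conj_ofReal]
    have hTx : ‖Matrix.toEuclideanLin M x‖ = ‖b.repr (Matrix.toEuclideanLin M x)‖ :=
      (b.repr.norm_map _).symm
    have hx : ‖x‖ = ‖b.repr x‖ := (b.repr.norm_map _).symm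
    show ‖Matrix.toEuclideanLin M x‖ ≤ |μ i₀| * ‖x‖
    rw [hTx, hx, EuclideanSpace.norm_eq, EuclideanSpace.norm_eq]
    calc Real.sqrt (∑ i, ‖b.repr (Matrix.toEuclideanLin M x) i‖ ^ 2)
        ≤ Real.sqrt (∑ i, |μ i₀| ^ 2 * ‖b.repr x i‖ ^ 2) := by
          apply Real.sqrt_le_sqrt
          apply Finset.sum_le_sum
          intro i _
          rw [hrepr i, norm_mul]
          have h3 : ‖(μ i : ℂ)‖ = |μ i| := by simp
          rw [mul_pow, h3]
          have h4 : |μ i| ^ 2 ≤ |μ i₀| ^ 2 :=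
            pow_le_pow_left₀ (abs_nonneg _) (hi₀ i (Finset.mem_univ i)) 2
          exact mul_le_mul_of_nonneg_right h4 (by positivity)
      _ = |μ i₀| * Real.sqrt (∑ i, ‖b.repr x i‖ ^ 2) := by
          rw [← Finset.mul_sum, Real.sqrt_mul (by positivity), Real.sqrt_sq (abs_nonneg _)]
  have hnorm : specNorm M = |μ i₀| := le_antisymm hub hlb
  refine ⟨if 0 ≤ μ i₀ then 1 else -1, δ, by split <;> simp, hδ1, ?_⟩
  rw [quad_smul, hquad i₀, hnorm]
  split
  · next h => rw [abs_of_nonneg h]; ring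
  · next h => rw [abs_of_neg (lt_of_not_ge h)]; ring

lemma exists_t (B W : Matrix ι ι ℂ) (hW : W ≠ 0) {m : ℝ} (hB : specNorm B ≤ m) :
    ∃ t : ℝ, 0 ≤ t ∧ specNorm (B + (t:ℂ) • W) = m := by
  have hWpos : 0 < ‖W‖ := by rw [norm_pos_iff]; exact hW
  set t₁ : ℝ := (m + ‖B‖) / ‖W‖ with ht₁
  have ht₁0 : 0 ≤ t₁ := by
    apply div_nonneg _ hWpos.le
    have := norm_nonneg B
    have hm : 0 ≤ m := le_trans (by rw [specNorm_eq] at hB ⊢; exact norm_nonneg B) hB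
    linarith
  have hcont : Continuous fun t : ℝ => specNorm (B + (t:ℂ) • W) := by
    simp only [specNorm_eq]
    apply Continuous.norm
    exact continuous_const.add ((Complex.continuous_ofReal.smul continuous_const))
  have hg0 : specNorm (B + ((0:ℝ):ℂ) • W) ≤ m := by simpa using hB
  have hg1 : m ≤ specNorm (B + (t₁:ℂ) • W) := by
    rw [specNorm_eq]
    have h1 : ‖(t₁:ℂ) • W‖ ≤ ‖B + (t₁:ℂ) • W‖ + ‖B‖ := by
      have h := norm_sub_le (B + (t₁:ℂ) • W) B
      simpa using h
    have h2 : ‖(t₁:ℂ) • W‖ = t₁ * ‖W‖ := by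
      rw [norm_smul]; simp [abs_of_nonneg ht₁0]
    rw [h2] at h1
    have h3 : t₁ * ‖W‖ = m + ‖B‖ := by rw [ht₁, div_mul_cancel₀ _ hWpos.ne']
    rw [specNorm_eq] at *
    linarith
  have hmem : m ∈ Set.Icc (specNorm (B + ((0:ℝ):ℂ) • W)) (specNorm (B + (t₁:ℂ) • W)) :=
    ⟨hg0, hg1⟩
  obtain ⟨t, ht, htm⟩ := intermediate_value_Icc ht₁0 (hcont.continuousOn) hmem
  exact ⟨t, ht.1, htm⟩

end Aux

section Sens

lemma exists_sensitive {n : ℕ} {A T : Type*} [DecidableEq A]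
    (f : (Fin n → A) → T) :
    ∀ (k : ℕ) (x y : Fin n → A),
      (Finset.univ.filter fun l => x l ≠ y l).card ≤ k → f x ≠ f y →
      ∃ (i : Fin n) (a b : Fin n → A), f a ≠ f b ∧ a i ≠ b i ∧ ∀ l, l ≠ i → a l = b l := by
  intro k
  induction k with
  | zero =>
    intro x y hc hf
    exfalso
    apply hf
    have : x = y := by
      funext l
      by_contra hl
      have hmem : l ∈ Finset.univ.filter fun l => x l ≠ y l := by simp [hl]
      have := Finset.card_pos.2 ⟨l, hmem⟩
      omega
    rw [this]
  | succ k ih =>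
    intro x y hc hf
    have hne : x ≠ y := fun h => hf (by rw [h])
    have : ∃ i, x i ≠ y i := by
      by_contra h
      push_neg at h
      exact hne (funext h)
    obtain ⟨i, hi⟩ := this
    set z := Function.update x i (y i) with hz
    by_cases hfz : f x ≠ f z
    · refine ⟨i, x, z, hfz, ?_, ?_⟩
      · simpa [hz, Function.update_self] using hi
      · intro l hl; simp [hz, Function.update_of_ne hl]
    · push_neg at hfz
      have hfzy : f z ≠ f y := by rw [← hfz]; exact hf
      apply ih z y ?_ hfzy
      have hsub : (Finset.univ.filter fun l => z l ≠ y l) ⊆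
          (Finset.univ.filter fun l => x l ≠ y l).erase i := by
        intro l hl
        simp only [Finset.mem_filter, Finset.mem_univ, true_and] at hl
        by_cases hli : l = i
        · exfalso; apply hl; rw [hli]; simp [hz, Function.update_self]
        · rw [Finset.mem_erase]
          refine ⟨hli, by simp only [Finset.mem_filter, Finset.mem_univ, true_and]
                          rwa [hz, Function.update_of_ne hli] at hl⟩
      have hcard := Finset.card_le_card hsub
      have : ((Finset.univ.filter fun l => x l ≠ y l).erase i).card ≤ k := by
        have hmem : i ∈ (Finset.univ.filter fun l => x l ≠ y l) := by simp [hi]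
        rw [Finset.card_erase_of_mem hmem]
        omega
      omega

/-- elementary symmetric 0-1 matrix supported on a pair -/
def Zmat {n : ℕ} {A : Type*} (a b : Fin n → A) [DecidableEq (Fin n → A)] :
    Matrix (Fin n → A) (Fin n → A) ℂ :=
  Matrix.of fun x y => if (x = a ∧ y = b) ∨ (x = b ∧ y = a) then 1 else 0

lemma Zmat_herm {n : ℕ} {A : Type*} [DecidableEq (Fin n → A)] (a b : Fin n → A) :
    (Zmat a b).IsHermitian := by
  unfold Matrix.IsHermitian
  ext x y
  simp only [Matrix.conjTranspose_apply, Zmat, Matrix.of_apply]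
  split_ifs with h1 h2 h2 <;> simp_all <;> tauto

lemma Zmat_support {n : ℕ} {A : Type*} [DecidableEq (Fin n → A)] {a b x y : Fin n → A}
    (h : Zmat a b x y ≠ 0) : (x = a ∧ y = b) ∨ (x = b ∧ y = a) := by
  by_contra hc
  apply h
  simp [Zmat, hc]

end Sens

theorem stmt6
    {n : ℕ} {A T : Type*} [Fintype A] [DecidableEq A]
    (f : (Fin n → A) → T)
    -- `G` is a group of permutations of the inputs, each induced by a pair
    -- `(τ, σ) ∈ S_n × S_A^n` acting by `π(x)_j = σ_{τ⁻¹(j)}(x_{τ⁻¹(j)})`,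
    -- and each an automorphism of `f`.
    (G : Subgroup (Equiv.Perm (Fin n → A)))
    (hform : ∀ π ∈ G, ∃ τ : Equiv.Perm (Fin n), ∃ σ : Fin n → Equiv.Perm A,
      ∀ (x : Fin n → A) (j : Fin n), π x j = σ (τ.symm j) (x (τ.symm j)))
    (hauto : ∀ π ∈ G, ∀ x y, f x ≠ f y → f (π x) ≠ f (π y))
    -- index transitivity: for every `i, j` some automorphism in `G` sends index `i` to `j`
    (hidx : ∀ i j : Fin n, ∃ π ∈ G, ∃ τ : Equiv.Perm (Fin n), ∃ σ : Fin n → Equiv.Perm A,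
      (∀ (x : Fin n → A) (l : Fin n), π x l = σ (τ.symm l) (x (τ.symm l))) ∧ τ i = j)
    (Γ : Matrix (Fin n → A) (Fin n → A) ℂ)
    (hΓherm : Γ.IsHermitian) (hΓadv : ∀ x y, f x = f y → Γ x y = 0) (hΓne : Γ ≠ 0) :
    ∃ Γ' : Matrix (Fin n → A) (Fin n → A) ℂ,
      Γ'.IsHermitian ∧ (∀ x y, f x = f y → Γ' x y = 0) ∧ Γ' ≠ 0 ∧
      (∀ i j : Fin n, specNorm (Γ' ⊙ Dmat i) = specNorm (Γ' ⊙ Dmat j)) ∧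
      specNorm Γ / ⨆ i : Fin n, specNorm (Γ ⊙ Dmat i) ≤
        specNorm Γ' / ⨆ i : Fin n, specNorm (Γ' ⊙ Dmat i) := by
  classical
  have hx0 : ∃ x y, Γ x y ≠ 0 := by
    by_contra h
    push_neg at h
    exact hΓne (by ext x y; simpa using h x y)
  obtain ⟨x₀, y₀, hxy0⟩ := hx0
  have hfxy0 : f x₀ ≠ f y₀ := fun h => hxy0 (hΓadv _ _ h)
  have hx0ne : x₀ ≠ y₀ := fun h => hfxy0 (by rw [h])
  have hiwe : ∃ i : Fin n, x₀ i ≠ y₀ i := by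
    by_contra h
    push_neg at h
    exact hx0ne (funext h)
  obtain ⟨iw, hiw⟩ := hiwe
  haveI : Nonempty (Fin n) := ⟨iw⟩
  haveI : Nonempty (Fin n → A) := ⟨x₀⟩
  set m := ⨆ i : Fin n, specNorm (Γ ⊙ Dmat i) with hm
  have hbdd : BddAbove (Set.range fun i : Fin n => specNorm (Γ ⊙ Dmat i)) :=
    Set.Finite.bddAbove (Set.finite_range _)
  have hle : ∀ i, specNorm (Γ ⊙ Dmat i) ≤ m := fun i => le_ciSup hbdd i
  have hDiw : (Γ ⊙ Dmat iw) ≠ 0 := by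
    intro h
    apply hxy0
    have h2 : (Γ ⊙ Dmat iw) x₀ y₀ = 0 := by rw [h]; rfl
    simpa [Matrix.hadamard_apply, Dmat, hiw] using h2
  have hmpos : 0 < m := lt_of_lt_of_le (specNorm_pos hDiw) (hle iw)
  -- sensitive pairs
  obtain ⟨i₁, a₁, b₁, hfab₁, hab₁, hrest₁⟩ :=
    exists_sensitive f ((Finset.univ.filter fun l => x₀ l ≠ y₀ l).card) x₀ y₀ le_rfl hfxy0
  have hpairs : ∀ j : Fin n, ∃ a b : Fin n → A,
      f a ≠ f b ∧ a j ≠ b j ∧ ∀ l, l ≠ j → a l = b l := by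
    intro j
    obtain ⟨π, hπG, τ, σ, hact, hτ⟩ := hidx i₁ j
    refine ⟨π a₁, π b₁, hauto π hπG a₁ b₁ hfab₁, ?_, ?_⟩
    · rw [hact, hact]
      have hts : τ.symm j = i₁ := by rw [← hτ, Equiv.symm_apply_apply]
      rw [hts]
      exact fun h => hab₁ ((σ i₁).injective h)
    · intro l hl
      rw [hact, hact]
      have hts : τ.symm l ≠ i₁ := by
        intro h
        apply hl
        rw [← hτ, ← h, Equiv.apply_symm_apply]
      rw [hrest₁ _ hts]
  choose a b hfab habj habr using hpairs
  -- principal eigen data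
  obtain ⟨s, δ, hs, hδ1, hquadΓ₂⟩ := herm_exists_unit Γ hΓherm
  set Γ₂ := (s:ℂ) • Γ with hΓ₂
  have hsabs : |s| = 1 := by rcases hs with h | h <;> simp [h]
  have hΓ₂herm : Γ₂.IsHermitian := by
    unfold Matrix.IsHermitian
    rw [hΓ₂, Matrix.conjTranspose_smul, hΓherm.eq]
    simp [Complex.conj_ofReal]
  set sg := fun j : Fin n => if 0 ≤ quad (Zmat (a j) (b j)) δ then (1:ℝ) else -1 with hsg
  set Z := fun j : Fin n => ((sg j : ℂ)) • Zmat (a j) (b j) with hZ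
  have hZquad : ∀ j, 0 ≤ quad (Z j) δ := by
    intro j
    simp only [hZ]
    rw [quad_smul]
    simp only [hsg]
    split
    · next h => simpa using h
    · next h => push_neg at h; nlinarith [h.le]
  have hZsupp : ∀ j x y, Z j x y ≠ 0 → (x = a j ∧ y = b j) ∨ (x = b j ∧ y = a j) := by
    intro j x y h
    apply Zmat_support (a := a j) (b := b j)
    intro h0
    apply h
    simp [hZ, Matrix.smul_apply, h0]
  have hsgne : ∀ j, (sg j : ℂ) ≠ 0 := by
    intro j
    simp only [hsg]
    split <;> norm_num
  have hZne : ∀ j, Z j ≠ 0 := by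
    intro j h
    have h1 : Z j (a j) (b j) = (sg j : ℂ) := by
      simp [hZ, Zmat, Matrix.smul_apply]
    rw [h] at h1
    exact hsgne j (by rw [← h1]; rfl)
  have hΓ₂D : ∀ j, specNorm (Γ₂ ⊙ Dmat j) ≤ m := by
    intro j
    rw [hΓ₂, Matrix.smul_hadamard, specNorm_smul, hsabs, one_mul]
    exact hle j
  choose t ht0 htm using fun j => exists_t (Γ₂ ⊙ Dmat j) (Z j) (hZne j) (hΓ₂D j)
  set S := ∑ j : Fin n, (t j : ℂ) • Z j with hS
  set Γ' := Γ₂ + S with hΓ'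
  have hSD : ∀ k, S ⊙ Dmat k = (t k : ℂ) • Z k := by
    intro k
    ext x y
    simp only [hS, Matrix.hadamard_apply, Matrix.sum_apply, Matrix.smul_apply, Dmat,
      Matrix.of_apply, smul_eq_mul]
    by_cases hxy : x k = y k
    · have hZk : Z k x y = 0 := by
        by_contra h0
        rcases hZsupp k x y h0 with ⟨hx, hy⟩ | ⟨hx, hy⟩
        · exact habj k (by rw [← hx, ← hy] at *; exact hxy)
        · exact habj k (by rw [← hy, ← hx] at *; exact hxy.symm)
      simp [hxy, hZk]
    · have hone : (if x k ≠ y k then (1:ℂ) else 0) = 1 := if_pos hxy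
      rw [hone, mul_one]
      rw [Finset.sum_eq_single k]
      · intro j _ hjk
        have hZj : Z j x y = 0 := by
          by_contra h0
          rcases hZsupp j x y h0 with ⟨hx, hy⟩ | ⟨hx, hy⟩
          · exact hxy (by rw [hx, hy, habr j k (Ne.symm hjk)])
          · exact hxy (by rw [hx, hy, habr j k (Ne.symm hjk)])
        rw [hZj, mul_zero]
      · intro h
        exact absurd (Finset.mem_univ k) h
  have hΓ'D : ∀ k, Γ' ⊙ Dmat k = Γ₂ ⊙ Dmat k + (t k:ℂ) • Z k := by
    intro k; rw [hΓ', Matrix.add_hadamard, hSD k]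
  have hΓ'Dnorm : ∀ k, specNorm (Γ' ⊙ Dmat k) = m := by
    intro k; rw [hΓ'D k]; exact htm k
  have hquadΓ' : specNorm Γ ≤ quad Γ' δ := by
    rw [hΓ', quad_add, hquadΓ₂, hS, quad_sum]
    have hnn : 0 ≤ ∑ j : Fin n, quad ((t j:ℂ) • Z j) δ :=
      Finset.sum_nonneg fun j _ => by
        rw [quad_smul]; exact mul_nonneg (ht0 j) (hZquad j)
    linarith
  have hΓ'norm : specNorm Γ ≤ specNorm Γ' :=
    le_trans hquadΓ' (le_trans (le_abs_self _) (abs_quad_le Γ' δ hδ1))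
  have hΓpos : 0 < specNorm Γ := specNorm_pos hΓne
  have hΓ'ne : Γ' ≠ 0 := by
    intro h
    rw [h] at hΓ'norm
    have h0 : specNorm (0 : Matrix (Fin n → A) (Fin n → A) ℂ) = 0 := by
      rw [specNorm_eq, norm_zero]
    rw [h0] at hΓ'norm
    linarith
  have hΓ'herm : Γ'.IsHermitian := by
    apply Matrix.IsHermitian.add hΓ₂herm
    have hj : ∀ j : Fin n, ((t j:ℂ) • Z j).IsHermitian := by
      intro j
      unfold Matrix.IsHermitian
      simp only [hZ]
      rw [Matrix.conjTranspose_smul, Matrix.conjTranspose_smul, (Zmat_herm (a j) (b j)).eq]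
      simp [Complex.conj_ofReal]
    unfold Matrix.IsHermitian
    rw [hS, Matrix.conjTranspose_sum]
    exact Finset.sum_congr rfl fun j _ => hj j
  have hΓ'adv : ∀ x y, f x = f y → Γ' x y = 0 := by
    intro x y hfe
    have hZ0 : ∀ j, Z j x y = 0 := by
      intro j
      by_contra h0
      rcases hZsupp j x y h0 with ⟨hx, hy⟩ | ⟨hx, hy⟩
      · rw [hx, hy] at hfe; exact hfab j hfe
      · rw [hx, hy] at hfe; exact hfab j hfe.symm
    have hΓ0 : Γ x y = 0 := hΓadv x y hfe
    simp [hΓ', hS, Matrix.add_apply, Matrix.sum_apply, Matrix.smul_apply, hZ0, hΓ₂, hΓ0]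
  refine ⟨Γ', hΓ'herm, hΓ'adv, hΓ'ne, ?_, ?_⟩
  · intro i j; rw [hΓ'Dnorm i, hΓ'Dnorm j]
  · have hsup' : ⨆ i : Fin n, specNorm (Γ' ⊙ Dmat i) = m := by
      have hfun : (fun i : Fin n => specNorm (Γ' ⊙ Dmat i)) = fun _ => m := funext hΓ'Dnorm
      rw [hfun]
      exact ciSup_const
    rw [hsup']
    gcongr
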